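/- The functions I₁ = 2√r cos(θ/2) - f and I₂ = 2√r sin(θ/2) - g, where r = √(f'² + g'²) and θ = arctan(g'/f'), are first integrals of the system f'' = (f'² + g'²)^{3/4} cos((3/2) arctan(g'/f')), g'' = (f'² + g'²)^{3/4} sin((3/2) arctan(g'/f')), on solutions with f' > 0. -/

import Mathlib

/-! With `z = f' + i g'` and its principal square root `w = z ^ (1/2)` (defined since `f' > 0`),
the system says `z' = z ^ (3/2) = w³`. Differentiating `w² = z` gives `2 w w' = w³`, i.e.
`w' = z / 2`, so `2 w - (f + i g)` has derivative zero. Since `|z| = r` and `arg z = θ`, its real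
and imaginary parts are `I₁` and `I₂`. -/

open Real

theorem HasDerivAt.complex_re {G : ℝ → ℂ} {G' : ℂ} {x : ℝ} (h : HasDerivAt G G' x) :
    HasDerivAt (fun t => (G t).re) G'.re x :=
  Complex.reCLM.hasFDerivAt.comp_hasDerivAt x h

theorem HasDerivAt.complex_im {G : ℝ → ℂ} {G' : ℂ} {x : ℝ} (h : HasDerivAt G G' x) :
    HasDerivAt (fun t => (G t).im) G'.im x :=
  Complex.imCLM.hasFDerivAt.comp_hasDerivAt x h

section

open Complex

theorem Complex.arg_ofReal_add_mul_I {u : ℝ} (v : ℝ) (hu : 0 < u) :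
    arg (u + v * I) = Real.arctan (v / u) := by
  set θ := Real.arctan (v / u)
  have hcos : 0 < Real.cos θ := cos_arctan_pos _
  have hsin : Real.sin θ = v / u * Real.cos θ := by
    rw [← Real.tan_arctan (v / u), Real.tan_eq_sin_div_cos, div_mul_cancel₀ _ hcos.ne']
  have hpolar : (u : ℂ) + v * I = ↑(u / Real.cos θ) * (Real.cos θ + Real.sin θ * I) := by
    have hcos' : (Real.cos θ : ℂ) ≠ 0 := ofReal_ne_zero.2 hcos.ne'
    have hu' : (u : ℂ) ≠ 0 := ofReal_ne_zero.2 hu.ne'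
    rw [hsin]
    push_cast at hcos' ⊢
    field_simp
  have hθ : θ ∈ Set.Ioc (-π) π := by
    obtain ⟨h₁, h₂⟩ := arctan_mem_Ioo (v / u)
    constructor <;> linarith [pi_pos]
  rw [hpolar, arg_real_mul _ (div_pos hu hcos), ofReal_cos, ofReal_sin,
    arg_cos_add_sin_mul_I hθ]

theorem Complex.ofReal_add_mul_I_cpow {u : ℝ} (v : ℝ) (hu : 0 < u) (a : ℝ) :
    ((u : ℂ) + v * I) ^ (a : ℂ) = ↑((u ^ 2 + v ^ 2) ^ (a / 2)) *
      (↑(Real.cos (a * Real.arctan (v / u))) + ↑(Real.sin (a * Real.arctan (v / u))) * I) := by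
  rw [cpow_ofReal, norm_add_mul_I, arg_ofReal_add_mul_I v hu, sqrt_eq_rpow,
    ← rpow_mul (by positivity), mul_comm (Real.arctan _) a]
  ring_nf

theorem HasDerivAt.two_mul_cpow_half_sub {z F : ℝ → ℂ} {x : ℝ}
    (hz : HasDerivAt z (z x ^ (3 / 2 : ℂ)) x) (hF : HasDerivAt F (z x) x)
    (h0 : z x ∈ slitPlane) :
    HasDerivAt (fun t => 2 * z t ^ (1 / 2 : ℂ) - F t) 0 x := by
  have hsqrt := (hasStrictDerivAt_cpow_const (c := 1 / 2) h0).hasDerivAt.comp x hz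
  refine ((hsqrt.const_mul 2).sub hF).congr_deriv ?_
  rw [mul_assoc, ← cpow_add _ _ (slitPlane_ne_zero h0)]
  norm_num
  ring

theorem Complex.ofReal_add_mul_I_cpow_half {u : ℝ} (v : ℝ) (hu : 0 < u) :
    ((u : ℂ) + v * I) ^ (1 / 2 : ℂ) =
      ↑(√√(u ^ 2 + v ^ 2) * Real.cos (Real.arctan (v / u) / 2)) +
      ↑(√√(u ^ 2 + v ^ 2) * Real.sin (Real.arctan (v / u) / 2)) * I := by
  have hroot : √√(u ^ 2 + v ^ 2) = (u ^ 2 + v ^ 2) ^ ((1 / 2 : ℝ) / 2) := by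
    rw [sqrt_eq_rpow, sqrt_eq_rpow, ← rpow_mul (by positivity)]
    norm_num
  rw [show (1 / 2 : ℂ) = ((1 / 2 : ℝ) : ℂ) by norm_num, ofReal_add_mul_I_cpow v hu, hroot]
  push_cast
  ring_nf

end

open Real in
/-- First integrals `I₁ = 2√r cos(θ/2) - f`, `I₂ = 2√r sin(θ/2) - g`, where
`r = √(f'² + g'²)` and `θ = arctan(g'/f')`, of the system
`f'' = (f'²+g'²)^{3/4} cos((3/2) arctan(g'/f'))`,
`g'' = (f'²+g'²)^{3/4} sin((3/2) arctan(g'/f'))` on solutions with `f' > 0`. -/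
theorem first_integrals_case_N351_I12
    (I : Set ℝ) (hI : IsOpen I)
    (f g f' g' f'' g'' : ℝ → ℝ)
    (hf : ∀ x, HasDerivAt f (f' x) x) (hf' : ∀ x, HasDerivAt f' (f'' x) x)
    (hg : ∀ x, HasDerivAt g (g' x) x) (hg' : ∀ x, HasDerivAt g' (g'' x) x)
    (hpos : ∀ x ∈ I, 0 < f' x)
    (ode1 : ∀ x ∈ I, f'' x = (f' x ^ 2 + g' x ^ 2) ^ ((3:ℝ)/4)
        * cos ((3/2) * arctan (g' x / f' x)))
    (ode2 : ∀ x ∈ I, g'' x = (f' x ^ 2 + g' x ^ 2) ^ ((3:ℝ)/4)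
        * sin ((3/2) * arctan (g' x / f' x))) :
    (∀ x ∈ I, deriv (fun t => 2 * Real.sqrt (Real.sqrt (f' t ^ 2 + g' t ^ 2))
        * cos (arctan (g' t / f' t) / 2) - f t) x = 0) ∧
    (∀ x ∈ I, deriv (fun t => 2 * Real.sqrt (Real.sqrt (f' t ^ 2 + g' t ^ 2))
        * sin (arctan (g' t / f' t) / 2) - g t) x = 0) := by
  set J : ℝ → ℂ := fun t => 2 * ((f' t : ℂ) + g' t * Complex.I) ^ (1 / 2 : ℂ) -
    (f t + g t * Complex.I)
  have hJ : ∀ x ∈ I, HasDerivAt J 0 x := by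
    intro x hx
    have hz := (hf' x).ofReal_comp.add ((hg' x).ofReal_comp.mul_const Complex.I)
    have hF := (hf x).ofReal_comp.add ((hg x).ofReal_comp.mul_const Complex.I)
    refine HasDerivAt.two_mul_cpow_half_sub (hz.congr_deriv ?_) hF
      (Or.inl (by simpa using hpos x hx))
    rw [ode1 x hx, ode2 x hx, show (3 / 2 : ℂ) = ((3 / 2 : ℝ) : ℂ) by norm_num,
      Complex.ofReal_add_mul_I_cpow _ (hpos x hx)]
    norm_num
    ring
  have hJ_eq : ∀ t ∈ I,
      J t = ↑(2 * √√(f' t ^ 2 + g' t ^ 2) * cos (arctan (g' t / f' t) / 2) - f t)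
        + ↑(2 * √√(f' t ^ 2 + g' t ^ 2) * sin (arctan (g' t / f' t) / 2) - g t)
          * Complex.I := by
    intro t ht
    simp only [J, Complex.ofReal_add_mul_I_cpow_half _ (hpos t ht)]
    push_cast
    ring
  refine ⟨fun x hx => ?_, fun x hx => ?_⟩
  · refine ((hJ x hx).complex_re.congr_of_eventuallyEq ?_).deriv
    filter_upwards [hI.mem_nhds hx] with t ht
    rw [hJ_eq t ht, ← Complex.mk_eq_add_mul_I]
  · refine ((hJ x hx).complex_im.congr_of_eventuallyEq ?_).deriv
    filter_upwards [hI.mem_nhds hx] with t ht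
    rw [hJ_eq t ht, ← Complex.mk_eq_add_mul_I]
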